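/- Let u : ℝ × (0,∞) → ℝ be three times continuously differentiable with H_a u = 0 on ℝ × (0,∞), extending continuously together with ∂_t u to ℝ × [0,∞), with t ↦ u(t,0) differentiable, and such that for every t ∈ ℝ: lim_{y→0⁺} y^a ∂_y u(t,y) = −(1/d_γ) f(u(t,0)), lim_{y→∞} y^a ∂_y u(t,y) ∂_t u(t,y) = 0, and lim_{y→0⁺} y^a ∂_y u(t,y) ∂_t u(t,y) = −(1/d_γ) f(u(t,0)) ∂_t u(t,0). Assume that for every compact interval I ⊂ ℝ there is an integrable function g : (0,∞) → ℝ such that y^a(|∂_t u|² + |∂_y u|² + |∂_t u||∂_{tt}u| + |∂_y u||∂_{ty}u|)(t,y) ≤ g(y) for all t ∈ I and y > 0. Assume moreover that ∫₀^∞ y^a ((∂_t u(t,y))² + (∂_y u(t,y))²) dy → 0 and u(t,0) → 1 as t → +∞. Define V(t) = (1/2) ∫₀^∞ y^a ((∂_t u(t,y))² − (∂_y u(t,y))²) dy − (1/d_γ)(F(u(t,0)) − F(1)). Then V is nonincreasing on [0,∞) and V(t) → 0 as t → +∞. -/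

import Mathlib

/-!
Differentiating under the integral sign,
`V'(t) = ∫ y^a (u_t u_tt - u_y u_ty) dy - (1/d_γ) F'(u(t,0)) u_t(t,0)`.
The equation `H_a u = 0` in divergence form reads `(y^a u_y)_y = -y^a (u_tt + (n-1) tanh t · u_t)`,
so integrating `(y^a u_y u_t)_y` over `(0,∞)` and using the boundary behaviour of `y^a u_y u_t`
turns the `u_y u_ty` term into the `F`-term plus `u_t u_tt` terms; everything cancels except
`V'(t) = -(n-1) tanh t ∫ y^a u_t² dy`, which is `≤ 0` for `t ≥ 0`.
The limit follows from `|∫ y^a (u_t² - u_y²)| ≤ ∫ y^a (u_t² + u_y²) → 0` and continuity of `F`.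
-/

open Real Filter MeasureTheory Set Topology

noncomputable def pt (u : ℝ → ℝ → ℝ) (t y : ℝ) : ℝ := deriv (fun s => u s y) t
noncomputable def py (u : ℝ → ℝ → ℝ) (t y : ℝ) : ℝ := deriv (fun z => u t z) y
noncomputable def ptt (u : ℝ → ℝ → ℝ) (t y : ℝ) : ℝ := deriv (fun s => pt u s y) t
noncomputable def pyy (u : ℝ → ℝ → ℝ) (t y : ℝ) : ℝ := deriv (fun z => py u t z) y
noncomputable def pty (u : ℝ → ℝ → ℝ) (t y : ℝ) : ℝ := deriv (fun z => pt u t z) y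

/-- The degenerate elliptic operator `H_a u = u_yy + (a/y) u_y + u_tt + (n-1) tanh t · u_t`. -/
noncomputable def Ha (n : ℕ) (a : ℝ) (u : ℝ → ℝ → ℝ) (t y : ℝ) : ℝ :=
  pyy u t y + (a / y) * py u t y + ptt u t y + ((n : ℝ) - 1) * Real.tanh t * pt u t y

/-- The normalizing constant `d_γ = 2^{2γ-1} Γ(γ)/Γ(1-γ)` of the extension problem. -/
noncomputable def dgamma (γ : ℝ) : ℝ :=
  2 ^ (2 * γ - 1) * Real.Gamma γ / Real.Gamma (1 - γ)

/-- The Hamiltonian quantity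
`V(t) = (1/2)∫₀^∞ y^a ((∂_t u)² - (∂_y u)²) dy - (1/d_γ)(F(u(t,0)) - F(1))`. -/
noncomputable def Vham (a dγ : ℝ) (F : ℝ → ℝ) (u : ℝ → ℝ → ℝ) (t : ℝ) : ℝ :=
  (1/2) * (∫ y in Set.Ioi (0:ℝ), y ^ a * ((pt u t y) ^ 2 - (py u t y) ^ 2)) -
    (1/dγ) * (F (u t 0) - F 1)


open Function (uncurry)

section PartialDerivatives

variable {v : ℝ → ℝ → ℝ} {s : Set (ℝ × ℝ)} {t y : ℝ}

lemma hasDerivAt_pt (hv : DifferentiableAt ℝ (uncurry v) (t, y)) :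
    HasDerivAt (fun s => v s y) (pt v t y) t :=
  (show DifferentiableAt ℝ (uncurry v ∘ fun s => (s, y)) t from
    hv.comp t (differentiableAt_id.prodMk (differentiableAt_const y))).hasDerivAt

lemma hasDerivAt_py (hv : DifferentiableAt ℝ (uncurry v) (t, y)) :
    HasDerivAt (v t) (py v t y) y :=
  (show DifferentiableAt ℝ (uncurry v ∘ fun z => (t, z)) y from
    hv.comp y ((differentiableAt_const t).prodMk differentiableAt_id)).hasDerivAt

lemma pt_eq_fderiv (hv : DifferentiableAt ℝ (uncurry v) (t, y)) :
    pt v t y = fderiv ℝ (uncurry v) (t, y) (1, 0) :=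
  (show HasDerivAt (uncurry v ∘ fun s => (s, y)) _ t from
    hv.hasFDerivAt.comp_hasDerivAt t ((hasDerivAt_id t).prodMk (hasDerivAt_const t y))).deriv

lemma py_eq_fderiv (hv : DifferentiableAt ℝ (uncurry v) (t, y)) :
    py v t y = fderiv ℝ (uncurry v) (t, y) (0, 1) :=
  (show HasDerivAt (uncurry v ∘ fun z => (t, z)) _ y from
    hv.hasFDerivAt.comp_hasDerivAt y ((hasDerivAt_const y t).prodMk (hasDerivAt_id y))).deriv

variable {m k : WithTop ℕ∞}

lemma uncurry_pt_eqOn_fderiv (hv : ContDiffOn ℝ k (uncurry v) s) (hs : IsOpen s) (hk : k ≠ 0) :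
    EqOn (uncurry (pt v)) (fun p => fderiv ℝ (uncurry v) p (1, 0)) s := fun _ hp =>
  pt_eq_fderiv ((hv.differentiableOn hk).differentiableAt (hs.mem_nhds hp))

lemma uncurry_py_eqOn_fderiv (hv : ContDiffOn ℝ k (uncurry v) s) (hs : IsOpen s) (hk : k ≠ 0) :
    EqOn (uncurry (py v)) (fun p => fderiv ℝ (uncurry v) p (0, 1)) s := fun _ hp =>
  py_eq_fderiv ((hv.differentiableOn hk).differentiableAt (hs.mem_nhds hp))

lemma ContDiffOn.uncurry_pt (hv : ContDiffOn ℝ k (uncurry v) s) (hs : IsOpen s)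
    (hmk : m + 1 ≤ k) : ContDiffOn ℝ m (uncurry (pt v)) s :=
  ((hv.fderiv_of_isOpen hs hmk).clm_apply contDiffOn_const).congr
    (uncurry_pt_eqOn_fderiv hv hs (ne_bot_of_le_ne_bot (by simp) hmk))

lemma ContDiffOn.uncurry_py (hv : ContDiffOn ℝ k (uncurry v) s) (hs : IsOpen s)
    (hmk : m + 1 ≤ k) : ContDiffOn ℝ m (uncurry (py v)) s :=
  ((hv.fderiv_of_isOpen hs hmk).clm_apply contDiffOn_const).congr
    (uncurry_py_eqOn_fderiv hv hs (ne_bot_of_le_ne_bot (by simp) hmk))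

lemma fderiv_uncurry_pt_apply (hv : ContDiffOn ℝ 2 (uncurry v) s) (hs : IsOpen s) {p : ℝ × ℝ}
    (hp : p ∈ s) (w : ℝ × ℝ) :
    fderiv ℝ (uncurry (pt v)) p w = fderiv ℝ (fderiv ℝ (uncurry v)) p w (1, 0) := by
  have hd : DifferentiableAt ℝ (fderiv ℝ (uncurry v)) p :=
    ((hv.fderiv_of_isOpen hs (m := 1) (by norm_num)).differentiableOn (by simp)).differentiableAt
      (hs.mem_nhds hp)
  rw [((uncurry_pt_eqOn_fderiv hv hs (by simp)).eventuallyEq_of_mem (hs.mem_nhds hp)).fderiv_eq,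
    fderiv_clm_apply hd (differentiableAt_const _)]
  simp

lemma fderiv_uncurry_py_apply (hv : ContDiffOn ℝ 2 (uncurry v) s) (hs : IsOpen s) {p : ℝ × ℝ}
    (hp : p ∈ s) (w : ℝ × ℝ) :
    fderiv ℝ (uncurry (py v)) p w = fderiv ℝ (fderiv ℝ (uncurry v)) p w (0, 1) := by
  have hd : DifferentiableAt ℝ (fderiv ℝ (uncurry v)) p :=
    ((hv.fderiv_of_isOpen hs (m := 1) (by norm_num)).differentiableOn (by simp)).differentiableAt
      (hs.mem_nhds hp)
  rw [((uncurry_py_eqOn_fderiv hv hs (by simp)).eventuallyEq_of_mem (hs.mem_nhds hp)).fderiv_eq,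
    fderiv_clm_apply hd (differentiableAt_const _)]
  simp

lemma pt_py_eq_pty (hv : ContDiffOn ℝ 2 (uncurry v) s) (hs : IsOpen s) (hp : (t, y) ∈ s) :
    pt (py v) t y = pty v t y := by
  have h1 := (hv.uncurry_py hs (m := 1) (by norm_num)).differentiableOn (by simp)
  have h2 := (hv.uncurry_pt hs (m := 1) (by norm_num)).differentiableOn (by simp)
  rw [pt_eq_fderiv (h1.differentiableAt (hs.mem_nhds hp)), fderiv_uncurry_py_apply hv hs hp,
    ((hv.contDiffAt (hs.mem_nhds hp)).isSymmSndFDerivAt (by simp)).eq,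
    ← fderiv_uncurry_pt_apply hv hs hp]
  exact (py_eq_fderiv (h2.differentiableAt (hs.mem_nhds hp))).symm

end PartialDerivatives

section HalfPlane

variable {u : ℝ → ℝ → ℝ} {a : ℝ} {n : ℕ} {t y : ℝ}

lemma isOpen_setOf_snd_pos : IsOpen {p : ℝ × ℝ | 0 < p.2} :=
  isOpen_lt continuous_const continuous_snd

lemma ContinuousOn.uncurry_slice {f : ℝ → ℝ → ℝ}
    (hf : ContinuousOn (uncurry f) {p : ℝ × ℝ | 0 < p.2}) (t : ℝ) :
    ContinuousOn (f t) (Ioi 0) :=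
  hf.comp (continuous_const.prodMk continuous_id).continuousOn fun _ hy => hy

lemma continuousOn_rpow_const_Ioi : ContinuousOn (fun y : ℝ => y ^ a) (Ioi 0) :=
  continuousOn_id.rpow_const fun _ hy => Or.inl (ne_of_gt hy)

lemma hasDerivAt_rpow_mul_py (hu : ContDiffOn ℝ 2 (uncurry u) {p : ℝ × ℝ | 0 < p.2})
    (hy : 0 < y) (heq : Ha n a u t y = 0) :
    HasDerivAt (fun z => z ^ a * py u t z)
      (-(y ^ a * (ptt u t y + ((n : ℝ) - 1) * tanh t * pt u t y))) y := by
  have hpy : DifferentiableAt ℝ (uncurry (py u)) (t, y) :=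
    ((hu.uncurry_py isOpen_setOf_snd_pos (m := 1) (by norm_num)).differentiableOn
      (by simp)).differentiableAt (isOpen_setOf_snd_pos.mem_nhds hy)
  refine ((hasDerivAt_rpow_const (Or.inl hy.ne')).mul (hasDerivAt_py hpy)).congr_deriv ?_
  have hpyy : py (py u) t y = pyy u t y := rfl
  rw [Real.rpow_sub hy, Real.rpow_one, hpyy]
  unfold Ha at heq
  linear_combination y ^ a * heq

end HalfPlane

lemma integrableOn_of_continuousOn_of_abs_le {f g : ℝ → ℝ} {s : Set ℝ} (hs : MeasurableSet s)
    (hf : ContinuousOn f s) (hg : IntegrableOn g s) (hfg : ∀ y ∈ s, |f y| ≤ g y) :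
    IntegrableOn f s :=
  hg.mono' (hf.aestronglyMeasurable hs) ((ae_restrict_iff' hs).2 (Eventually.of_forall hfg))

section Domination

variable {u : ℝ → ℝ → ℝ} {a : ℝ} {t y : ℝ}

noncomputable def weightedDominant (a : ℝ) (u : ℝ → ℝ → ℝ) (t y : ℝ) : ℝ :=
  y ^ a * (|pt u t y| ^ 2 + |py u t y| ^ 2 + |pt u t y| * |ptt u t y| + |py u t y| * |pty u t y|)

lemma abs_weighted_terms_le (hy : 0 < y) :
    |y ^ a * pt u t y ^ 2| ≤ weightedDominant a u t y ∧
    |y ^ a * py u t y ^ 2| ≤ weightedDominant a u t y ∧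
    |y ^ a * pt u t y * ptt u t y| ≤ weightedDominant a u t y ∧
    |y ^ a * py u t y * pty u t y| ≤ weightedDominant a u t y := by
  have hY : 0 ≤ y ^ a := rpow_nonneg hy.le a
  have h1 := mul_nonneg hY (sq_nonneg |pt u t y|)
  have h2 := mul_nonneg hY (sq_nonneg |py u t y|)
  have h3 := mul_nonneg hY (mul_nonneg (abs_nonneg (pt u t y)) (abs_nonneg (ptt u t y)))
  have h4 := mul_nonneg hY (mul_nonneg (abs_nonneg (py u t y)) (abs_nonneg (pty u t y)))
  simp only [weightedDominant, abs_mul, abs_pow, abs_of_nonneg hY]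
  refine ⟨?_, ?_, ?_, ?_⟩ <;> linarith

lemma continuousOn_pt_py_ptt_pty (hu : ContDiffOn ℝ 2 (uncurry u) {p : ℝ × ℝ | 0 < p.2}) (t : ℝ) :
    ContinuousOn (pt u t) (Ioi 0) ∧ ContinuousOn (py u t) (Ioi 0) ∧
    ContinuousOn (ptt u t) (Ioi 0) ∧ ContinuousOn (pty u t) (Ioi 0) := by
  have hpt := hu.uncurry_pt isOpen_setOf_snd_pos (m := 1) (by norm_num)
  refine ⟨?_, ?_, ?_, ?_⟩ <;> apply ContinuousOn.uncurry_slice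
  · exact hpt.continuousOn
  · exact (hu.uncurry_py isOpen_setOf_snd_pos (m := 1) (by norm_num)).continuousOn
  · exact (hpt.uncurry_pt isOpen_setOf_snd_pos (m := 0) (by norm_num)).continuousOn
  · exact (hpt.uncurry_py isOpen_setOf_snd_pos (m := 0) (by norm_num)).continuousOn

lemma integrableOn_weighted_terms (hu : ContDiffOn ℝ 2 (uncurry u) {p : ℝ × ℝ | 0 < p.2})
    {g : ℝ → ℝ} (hg : IntegrableOn g (Ioi 0)) (hD : ∀ y, 0 < y → weightedDominant a u t y ≤ g y) :
    IntegrableOn (fun y => y ^ a * pt u t y ^ 2) (Ioi 0) ∧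
    IntegrableOn (fun y => y ^ a * py u t y ^ 2) (Ioi 0) ∧
    IntegrableOn (fun y => y ^ a * pt u t y * ptt u t y) (Ioi 0) ∧
    IntegrableOn (fun y => y ^ a * py u t y * pty u t y) (Ioi 0) := by
  obtain ⟨hpt, hpy, hptt, hpty⟩ := continuousOn_pt_py_ptt_pty hu t
  have hY : ContinuousOn (fun y : ℝ => y ^ a) (Ioi 0) := continuousOn_rpow_const_Ioi
  refine ⟨?_, ?_, ?_, ?_⟩ <;>
    refine integrableOn_of_continuousOn_of_abs_le measurableSet_Ioi (by fun_prop) hg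
      fun y hy => le_trans ?_ (hD y hy)
  exacts [(abs_weighted_terms_le hy).1, (abs_weighted_terms_le hy).2.1,
    (abs_weighted_terms_le hy).2.2.1, (abs_weighted_terms_le hy).2.2.2]

end Domination

section Energy

variable {u : ℝ → ℝ → ℝ} {a : ℝ} {n : ℕ}

lemma hasDerivAt_integral_rpow_mul_sq_sub_sq
    (hu : ContDiffOn ℝ 2 (uncurry u) {p : ℝ × ℝ | 0 < p.2}) {t₀ : ℝ} {g : ℝ → ℝ}
    (hg : IntegrableOn g (Ioi 0))
    (hD : ∀ t ∈ Icc (t₀ - 1) (t₀ + 1), ∀ y, 0 < y → weightedDominant a u t y ≤ g y) :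
    HasDerivAt (fun t => ∫ y in Ioi 0, y ^ a * (pt u t y ^ 2 - py u t y ^ 2))
      (∫ y in Ioi 0, 2 * (y ^ a * pt u t₀ y * ptt u t₀ y - y ^ a * py u t₀ y * pty u t₀ y))
      t₀ := by
  have hH := isOpen_setOf_snd_pos
  have hpt := hu.uncurry_pt hH (m := 1) (by norm_num)
  have hpy := hu.uncurry_py hH (m := 1) (by norm_num)
  have hY : ContinuousOn (fun y : ℝ => y ^ a) (Ioi 0) := continuousOn_rpow_const_Ioi
  have hmeas : ∀ t, AEStronglyMeasurable (fun y => y ^ a * (pt u t y ^ 2 - py u t y ^ 2))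
      (volume.restrict (Ioi 0)) := fun t => by
    obtain ⟨hpt, hpy, -, -⟩ := continuousOn_pt_py_ptt_pty hu t
    exact ContinuousOn.aestronglyMeasurable (by fun_prop) measurableSet_Ioi
  have hmeas' : AEStronglyMeasurable
      (fun y => 2 * (y ^ a * pt u t₀ y * ptt u t₀ y - y ^ a * py u t₀ y * pty u t₀ y))
      (volume.restrict (Ioi 0)) := by
    obtain ⟨hpt, hpy, hptt, hpty⟩ := continuousOn_pt_py_ptt_pty hu t₀
    exact ContinuousOn.aestronglyMeasurable (by fun_prop) measurableSet_Ioi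
  obtain ⟨h1, h2, -, -⟩ := integrableOn_weighted_terms hu hg (hD t₀ (by simp))
  have hbound : ∀ᵐ y ∂(volume.restrict (Ioi 0)), ∀ t ∈ Icc (t₀ - 1) (t₀ + 1),
      ‖2 * (y ^ a * pt u t y * ptt u t y - y ^ a * py u t y * pty u t y)‖ ≤ 4 * g y := by
    refine (ae_restrict_iff' measurableSet_Ioi).2 (Eventually.of_forall fun y hy t ht => ?_)
    obtain ⟨-, -, h3, h4⟩ := abs_weighted_terms_le (a := a) (u := u) (t := t) hy
    rw [Real.norm_eq_abs, abs_mul, abs_two]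
    linarith [abs_sub (y ^ a * pt u t y * ptt u t y) (y ^ a * py u t y * pty u t y), hD t ht y hy]
  have hdiff : ∀ᵐ y ∂(volume.restrict (Ioi 0)), ∀ t ∈ Icc (t₀ - 1) (t₀ + 1),
      HasDerivAt (fun t => y ^ a * (pt u t y ^ 2 - py u t y ^ 2))
        (2 * (y ^ a * pt u t y * ptt u t y - y ^ a * py u t y * pty u t y)) t := by
    refine (ae_restrict_iff' measurableSet_Ioi).2 (Eventually.of_forall fun y hy t _ => ?_)
    have hy' : (t, y) ∈ {p : ℝ × ℝ | 0 < p.2} := hy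
    have hdt := hasDerivAt_pt (((hpt.differentiableOn (by simp)) _ hy').differentiableAt
      (hH.mem_nhds hy'))
    have hdy := hasDerivAt_pt (((hpy.differentiableOn (by simp)) _ hy').differentiableAt
      (hH.mem_nhds hy'))
    rw [pt_py_eq_pty hu hH hy'] at hdy
    refine (((hdt.pow 2).sub (hdy.pow 2)).const_mul (y ^ a)).congr_deriv ?_
    change _ = 2 * (y ^ a * pt u t y * pt (pt u) t y - y ^ a * py u t y * pty u t y)
    ring
  exact (hasDerivAt_integral_of_dominated_loc_of_deriv_le (Icc_mem_nhds (by linarith)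
    (by linarith)) (Eventually.of_forall hmeas)
    (by simpa only [mul_sub, Pi.sub_def] using (h1.sub h2).integrable) hmeas' hbound
    (hg.const_mul 4) hdiff).2

lemma integral_Ioi_deriv_rpow_mul_py_mul_pt (hu : ContDiffOn ℝ 2 (uncurry u) {p : ℝ × ℝ | 0 < p.2})
    {t L₀ L₁ : ℝ} (heq : ∀ y, 0 < y → Ha n a u t y = 0)
    (hint : IntegrableOn (fun y => -(y ^ a * (ptt u t y + ((n : ℝ) - 1) * tanh t * pt u t y)) *
      pt u t y + y ^ a * py u t y * pty u t y) (Ioi 0))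
    (h₀ : Tendsto (fun y => y ^ a * py u t y * pt u t y) (𝓝[>] 0) (𝓝 L₀))
    (h₁ : Tendsto (fun y => y ^ a * py u t y * pt u t y) atTop (𝓝 L₁)) :
    ∫ y in Ioi 0, (-(y ^ a * (ptt u t y + ((n : ℝ) - 1) * tanh t * pt u t y)) * pt u t y +
      y ^ a * py u t y * pty u t y) = L₁ - L₀ := by
  have hpt := (hu.uncurry_pt isOpen_setOf_snd_pos (m := 1) (by norm_num)).differentiableOn
    (by simp)
  exact integral_Ioi_deriv_mul_eq_sub (fun y hy => hasDerivAt_rpow_mul_py hu hy (heq y hy))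
    (fun y hy => hasDerivAt_py ((hpt _ hy).differentiableAt
      (isOpen_setOf_snd_pos.mem_nhds (show (t, y) ∈ {p : ℝ × ℝ | 0 < p.2} from hy))))
    hint h₀ h₁

lemma hasDerivAt_Vham (hu : ContDiffOn ℝ 2 (uncurry u) {p : ℝ × ℝ | 0 < p.2})
    {F : ℝ → ℝ} {dγ t₀ : ℝ} {g : ℝ → ℝ} (heq : ∀ y, 0 < y → Ha n a u t₀ y = 0)
    (hF : DifferentiableAt ℝ F (u t₀ 0)) (htr : DifferentiableAt ℝ (fun t => u t 0) t₀)
    (hg : IntegrableOn g (Ioi 0))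
    (hD : ∀ t ∈ Icc (t₀ - 1) (t₀ + 1), ∀ y, 0 < y → weightedDominant a u t y ≤ g y)
    (h₀ : Tendsto (fun y => y ^ a * py u t₀ y * pt u t₀ y) (𝓝[>] 0)
      (𝓝 ((1 / dγ) * deriv F (u t₀ 0) * pt u t₀ 0)))
    (h₁ : Tendsto (fun y => y ^ a * py u t₀ y * pt u t₀ y) atTop (𝓝 0)) :
    HasDerivAt (Vham a dγ F u)
      (-(((n : ℝ) - 1) * tanh t₀) * ∫ y in Ioi 0, y ^ a * pt u t₀ y ^ 2) t₀ := by
  obtain ⟨h1, -, h3, h4⟩ := integrableOn_weighted_terms hu hg (hD t₀ (by simp))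
  have hparts_int : IntegrableOn (fun y => -(y ^ a * (ptt u t₀ y + ((n : ℝ) - 1) * tanh t₀ *
      pt u t₀ y)) * pt u t₀ y + y ^ a * py u t₀ y * pty u t₀ y) (Ioi 0) :=
    ((h3.neg.sub (h1.const_mul (((n : ℝ) - 1) * tanh t₀))).add h4).congr_fun (fun y _ => by
      simp only [Pi.add_apply, Pi.sub_apply, Pi.neg_apply]
      ring) measurableSet_Ioi
  have hparts := integral_Ioi_deriv_rpow_mul_py_mul_pt hu heq hparts_int h₀ h₁
  have hI' : ∫ y in Ioi 0, 2 * (y ^ a * pt u t₀ y * ptt u t₀ y - y ^ a * py u t₀ y * pty u t₀ y)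
      = 2 * ((1 / dγ) * deriv F (u t₀ 0) * pt u t₀ 0) -
        2 * ((n : ℝ) - 1) * tanh t₀ * ∫ y in Ioi 0, y ^ a * pt u t₀ y ^ 2 := by
    calc _ = ∫ y in Ioi 0, (-2 * (-(y ^ a * (ptt u t₀ y + ((n : ℝ) - 1) * tanh t₀ * pt u t₀ y)) *
            pt u t₀ y + y ^ a * py u t₀ y * pty u t₀ y) +
            -2 * ((n : ℝ) - 1) * tanh t₀ * (y ^ a * pt u t₀ y ^ 2)) :=
          setIntegral_congr_fun measurableSet_Ioi fun y _ => by ring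
      _ = _ := by
          rw [integral_add (hparts_int.const_mul _) (h1.const_mul _), integral_const_mul,
            integral_const_mul, hparts]
          ring
  have hFu : HasDerivAt (fun t => F (u t 0)) (deriv F (u t₀ 0) * pt u t₀ 0) t₀ :=
    hF.hasDerivAt.comp t₀ htr.hasDerivAt
  refine (((hasDerivAt_integral_rpow_mul_sq_sub_sq hu hg hD).const_mul (1 / 2)).sub
    ((hFu.sub_const (F 1)).const_mul (1 / dγ))).congr_deriv ?_
  rw [hI']
  ring

end Energy

lemma tanh_nonneg {x : ℝ} (hx : 0 ≤ x) : 0 ≤ tanh x := by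
  rw [tanh_eq_sinh_div_cosh]
  exact div_nonneg (sinh_nonneg_iff.2 hx) (cosh_pos x).le

lemma tendsto_integral_rpow_mul_sq_sub_sq {u : ℝ → ℝ → ℝ} {a : ℝ}
    (hint : ∀ t, IntegrableOn (fun y => y ^ a * (pt u t y ^ 2 + py u t y ^ 2)) (Ioi 0))
    (hdir : Tendsto (fun t => ∫ y in Ioi 0, y ^ a * (pt u t y ^ 2 + py u t y ^ 2)) atTop (𝓝 0)) :
    Tendsto (fun t => ∫ y in Ioi 0, y ^ a * (pt u t y ^ 2 - py u t y ^ 2)) atTop (𝓝 0) := by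
  refine squeeze_zero_norm (fun t => norm_integral_le_of_norm_le (hint t) ?_) hdir
  refine (ae_restrict_iff' measurableSet_Ioi).2 (Eventually.of_forall fun y hy => ?_)
  have hY : 0 ≤ y ^ a := rpow_nonneg (le_of_lt hy) a
  rw [Real.norm_eq_abs, abs_mul, abs_of_nonneg hY]
  exact mul_le_mul_of_nonneg_left (abs_sub_le_iff.2
    ⟨by linarith [sq_nonneg (py u t y)], by linarith [sq_nonneg (pt u t y)]⟩) hY

theorem stmt9_general (n : ℕ) (hn : 2 ≤ n) (γ : ℝ)
    (F : ℝ → ℝ) (hFs : ContDiff ℝ (⊤ : ℕ∞) F) (u : ℝ → ℝ → ℝ)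
    (hsm : ContDiffOn ℝ 3 (fun p : ℝ × ℝ => u p.1 p.2) {p : ℝ × ℝ | 0 < p.2})
    (heq : ∀ t y : ℝ, 0 < y → Ha n (1 - 2*γ) u t y = 0)
    (htr : Differentiable ℝ (fun t => u t 0))
    (hbc2 : ∀ t : ℝ, Tendsto (fun y : ℝ => y ^ (1 - 2*γ) * py u t y * pt u t y)
      atTop (𝓝 0))
    (hbc3 : ∀ t : ℝ, Tendsto (fun y : ℝ => y ^ (1 - 2*γ) * py u t y * pt u t y)
      (𝓝[>] (0:ℝ)) (𝓝 ((1 / dgamma γ) * deriv F (u t 0) * pt u t 0)))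
    (hdom : ∀ c d : ℝ, ∃ g : ℝ → ℝ, IntegrableOn g (Set.Ioi 0) ∧
      ∀ t ∈ Set.Icc c d, ∀ y : ℝ, 0 < y →
        y ^ (1 - 2*γ) * (|pt u t y| ^ 2 + |py u t y| ^ 2 + |pt u t y| * |ptt u t y|
          + |py u t y| * |pty u t y|) ≤ g y)
    (hdir : Tendsto (fun t => ∫ y in Set.Ioi (0:ℝ),
      y ^ (1 - 2*γ) * ((pt u t y) ^ 2 + (py u t y) ^ 2)) atTop (𝓝 0))
    (hone : Tendsto (fun t => u t 0) atTop (𝓝 1)) :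
    AntitoneOn (Vham (1 - 2*γ) (dgamma γ) F u) (Set.Ici 0) ∧
      Tendsto (Vham (1 - 2*γ) (dgamma γ) F u) atTop (𝓝 0) := by
  have hu : ContDiffOn ℝ 2 (uncurry u) {p : ℝ × ℝ | 0 < p.2} := hsm.of_le (by norm_num)
  have hV : ∀ t, HasDerivAt (Vham (1 - 2*γ) (dgamma γ) F u)
      (-(((n : ℝ) - 1) * tanh t) * ∫ y in Ioi 0, y ^ (1 - 2*γ) * pt u t y ^ 2) t := fun t => by
    obtain ⟨g, hg, hD⟩ := hdom (t - 1) (t + 1)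
    exact hasDerivAt_Vham hu (heq t) (hFs.differentiable (by simp) _) (htr t) hg hD (hbc3 t)
      (hbc2 t)
  refine ⟨antitoneOn_of_hasDerivWithinAt_nonpos (convex_Ici 0)
    (fun t _ => (hV t).continuousAt.continuousWithinAt) (fun t _ => (hV t).hasDerivWithinAt)
    fun t ht => ?_, ?_⟩
  · rw [interior_Ici, mem_Ioi] at ht
    have hn1 : (1 : ℝ) ≤ n := by exact_mod_cast (by omega : 1 ≤ n)
    refine mul_nonpos_of_nonpos_of_nonneg
      (neg_nonpos.2 (mul_nonneg (sub_nonneg.2 hn1) (tanh_nonneg ht.le))) ?_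
    exact setIntegral_nonneg measurableSet_Ioi fun y (hy : 0 < y) =>
      mul_nonneg (rpow_nonneg hy.le _) (sq_nonneg _)
  · have hint : ∀ t, IntegrableOn (fun y => y ^ (1 - 2*γ) * (pt u t y ^ 2 + py u t y ^ 2))
        (Ioi 0) := fun t => by
      obtain ⟨g, hg, hD⟩ := hdom t t
      obtain ⟨h1, h2, -, -⟩ := integrableOn_weighted_terms hu hg (hD t (by simp))
      simpa only [mul_add, Pi.add_def] using h1.add h2
    have hF : Tendsto (fun t => F (u t 0) - F 1) atTop (𝓝 0) := by
      simpa using ((hFs.continuous.tendsto 1).comp hone).sub_const (F 1)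
    have hlim := ((tendsto_integral_rpow_mul_sq_sub_sq hint hdir).const_mul (1 / 2)).sub
      (hF.const_mul (1 / dgamma γ))
    rwa [mul_zero, mul_zero, sub_zero] at hlim

/-- The Hamiltonian energy `V` is nonincreasing on `[0,∞)` and decreases to zero as
`t → +∞`, under the additional assumptions that the weighted Dirichlet integral tends to
`0` and `u(t,0) → 1` as `t → +∞`. -/
theorem stmt9 (n : ℕ) (hn : 2 ≤ n) (γ : ℝ) (hγ : γ ∈ Set.Ioo (0:ℝ) 1)
    (F : ℝ → ℝ) (hFs : ContDiff ℝ (⊤ : ℕ∞) F) (u : ℝ → ℝ → ℝ)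
    (hsm : ContDiffOn ℝ 3 (fun p : ℝ × ℝ => u p.1 p.2) {p : ℝ × ℝ | 0 < p.2})
    (heq : ∀ t y : ℝ, 0 < y → Ha n (1 - 2*γ) u t y = 0)
    (hcont : ContinuousOn (fun p : ℝ × ℝ => u p.1 p.2) {p : ℝ × ℝ | 0 ≤ p.2})
    (hptc : ContinuousOn (fun p : ℝ × ℝ => pt u p.1 p.2) {p : ℝ × ℝ | 0 ≤ p.2})
    (htr : Differentiable ℝ (fun t => u t 0))
    (hbc1 : ∀ t : ℝ, Tendsto (fun y : ℝ => y ^ (1 - 2*γ) * py u t y) (𝓝[>] (0:ℝ))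
      (𝓝 ((1 / dgamma γ) * deriv F (u t 0))))
    (hbc2 : ∀ t : ℝ, Tendsto (fun y : ℝ => y ^ (1 - 2*γ) * py u t y * pt u t y)
      atTop (𝓝 0))
    (hbc3 : ∀ t : ℝ, Tendsto (fun y : ℝ => y ^ (1 - 2*γ) * py u t y * pt u t y)
      (𝓝[>] (0:ℝ)) (𝓝 ((1 / dgamma γ) * deriv F (u t 0) * pt u t 0)))
    (hdom : ∀ c d : ℝ, ∃ g : ℝ → ℝ, IntegrableOn g (Set.Ioi 0) ∧
      ∀ t ∈ Set.Icc c d, ∀ y : ℝ, 0 < y →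
        y ^ (1 - 2*γ) * (|pt u t y| ^ 2 + |py u t y| ^ 2 + |pt u t y| * |ptt u t y|
          + |py u t y| * |pty u t y|) ≤ g y)
    (hdir : Tendsto (fun t => ∫ y in Set.Ioi (0:ℝ),
      y ^ (1 - 2*γ) * ((pt u t y) ^ 2 + (py u t y) ^ 2)) atTop (𝓝 0))
    (hone : Tendsto (fun t => u t 0) atTop (𝓝 1)) :
    AntitoneOn (Vham (1 - 2*γ) (dgamma γ) F u) (Set.Ici 0) ∧
      Tendsto (Vham (1 - 2*γ) (dgamma γ) F u) atTop (𝓝 0) :=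
  stmt9_general n hn γ F hFs u hsm heq htr hbc2 hbc3 hdom hdir hone
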